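/- Let (Z,d) be a complete separable metric space, let μ and μ_i (i ∈ ℕ) be Borel probability measures on Z, and suppose that for each i there is a coupling q_i of μ_i and μ such that ∫_{Z×Z} d(x,y) dq_i(x,y) → 0 as i → ∞. Then: (a) μ_i → μ narrowly; and (b) for every point z ∈ Z all of whose open balls have positive μ-measure, there exist points z_i ∈ Z, with all open balls around z_i having positive μ_i-measure, such that z_i → z in Z. -/
import Mathlib


open MeasureTheory Filter Topology BoundedContinuousFunction
open scoped ENNReal

/-- `q` is a coupling of `μ` and `ν`: a probability measure on `Z × Z` whose
marginals are `μ` and `ν`. -/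
def IsCoupling {Z : Type*} [MeasurableSpace Z]
    (q : Measure (Z × Z)) (μ ν : Measure Z) : Prop :=
  IsProbabilityMeasure q ∧ q.map Prod.fst = μ ∧ q.map Prod.snd = ν

/-- If `μ i`, `μ` are Borel probability measures on a complete separable metric space
and `q i` are couplings of `μ i` and `μ` with `∫ d dq_i → 0`, then `μ i → μ` narrowly,
and every point `z` all of whose open balls have positive `μ`-measure is the limit of
points `z i` all of whose open balls have positive `μ i`-measure. -/
theorem narrow_and_pointed_convergence_of_wasserstein {Z : Type*} [MetricSpace Z]
    [CompleteSpace Z] [TopologicalSpace.SeparableSpace Z] [MeasurableSpace Z]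
    [BorelSpace Z]
    (μ : Measure Z) [IsProbabilityMeasure μ]
    (μseq : ℕ → Measure Z) (hμseq : ∀ i, IsProbabilityMeasure (μseq i))
    (q : ℕ → Measure (Z × Z)) (hq : ∀ i, IsCoupling (q i) (μseq i) μ)
    (hconv : Tendsto (fun i => ∫⁻ p, edist p.1 p.2 ∂(q i)) atTop (𝓝 0)) :
    (∀ f : Z →ᵇ ℝ,
      Tendsto (fun i => ∫ x, f x ∂(μseq i)) atTop (𝓝 (∫ x, f x ∂μ))) ∧
    (∀ z : Z, (∀ r > (0 : ℝ), 0 < μ (Metric.ball z r)) →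
      ∃ zseq : ℕ → Z,
        (∀ i, ∀ r > (0 : ℝ), 0 < (μseq i) (Metric.ball (zseq i) r)) ∧
        Tendsto zseq atTop (𝓝 z)) := by
  haveI : SecondCountableTopology Z := UniformSpace.secondCountable_of_separable Z
  haveI : ∀ i, IsProbabilityMeasure (μseq i) := hμseq
  haveI : ∀ i, IsProbabilityMeasure (q i) := fun i => (hq i).1
  have hfst : ∀ i, (q i).map Prod.fst = μseq i := fun i => (hq i).2.1
  have hsnd : ∀ i, (q i).map Prod.snd = μ := fun i => (hq i).2.2
  -- Markov inequality for the couplings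
  have markov : ∀ (i : ℕ) (e : ℝ≥0∞), e ≠ 0 → e ≠ ∞ →
      q i {p : Z × Z | e ≤ edist p.1 p.2} ≤ (∫⁻ p, edist p.1 p.2 ∂(q i)) / e := by
    intro i e he he'
    exact meas_ge_le_lintegral_div (measurable_edist.aemeasurable) he he'
  -- the key positivity lemma used in both parts:
  -- for every positive-ball point `z` and `ε > 0`, eventually `μseq i (ball z ε) > 0`.
  have ball_pos : ∀ z : Z, (∀ r > (0 : ℝ), 0 < μ (Metric.ball z r)) →
      ∀ ε > (0 : ℝ), ∀ᶠ i in atTop, 0 < μseq i (Metric.ball z ε) := by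
    intro z hz ε hε
    set c := μ (Metric.ball z (ε / 2)) with hc
    have hcpos : 0 < c := hz _ (by linarith)
    set e : ℝ≥0∞ := ENNReal.ofReal (ε / 2) with he
    have he0 : e ≠ 0 := by
      simp [he, ENNReal.ofReal_eq_zero, not_le]; linarith
    have he' : e ≠ ∞ := ENNReal.ofReal_ne_top
    have hec : 0 < c * e := ENNReal.mul_pos hcpos.ne' he0
    filter_upwards [hconv.eventually_lt_const hec] with i hi
    -- q i of the "good" set is positive
    have hA : q i (Prod.snd ⁻¹' Metric.ball z (ε / 2)) = c := by
      rw [← hsnd i, Measure.map_apply measurable_snd measurableSet_ball] at hc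
      exact hc.symm
    have hB : q i {p : Z × Z | e ≤ edist p.1 p.2} < c := by
      refine lt_of_le_of_lt (markov i e he0 he') ?_
      rw [ENNReal.div_lt_iff (Or.inl he0) (Or.inl he')]
      exact hi
    have hdiff : 0 < q i ((Prod.snd ⁻¹' Metric.ball z (ε / 2)) \
        {p : Z × Z | e ≤ edist p.1 p.2}) := by
      by_contra h
      push_neg at h
      have h0 : q i ((Prod.snd ⁻¹' Metric.ball z (ε / 2)) \
          {p : Z × Z | e ≤ edist p.1 p.2}) = 0 := le_antisymm h bot_le
      have : c ≤ q i {p : Z × Z | e ≤ edist p.1 p.2} := by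
        calc c = q i (Prod.snd ⁻¹' Metric.ball z (ε / 2)) := hA.symm
          _ ≤ q i ((Prod.snd ⁻¹' Metric.ball z (ε / 2)) \
              {p : Z × Z | e ≤ edist p.1 p.2}) + q i {p : Z × Z | e ≤ edist p.1 p.2} := by
                refine (measure_mono ?_).trans (measure_union_le _ _)
                intro p hp
                by_cases hpe : e ≤ edist p.1 p.2
                · exact Or.inr hpe
                · exact Or.inl ⟨hp, hpe⟩
          _ = q i {p : Z × Z | e ≤ edist p.1 p.2} := by rw [h0, zero_add]
      exact absurd this (not_le.mpr hB)
    refine lt_of_lt_of_le hdiff ?_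
    have hsub : (Prod.snd ⁻¹' Metric.ball z (ε / 2)) \ {p : Z × Z | e ≤ edist p.1 p.2}
        ⊆ Prod.fst ⁻¹' Metric.ball z ε := by
      rintro ⟨x, y⟩ ⟨hy, hxy⟩
      simp only [Set.mem_setOf_eq, not_le] at hxy
      have hxy' : dist x y < ε / 2 := by
        rw [he, edist_lt_ofReal] at hxy; exact hxy
      have hyz : dist y z < ε / 2 := Metric.mem_ball.mp hy
      have : dist x z < ε := by
        calc dist x z ≤ dist x y + dist y z := dist_triangle _ _ _
          _ < ε / 2 + ε / 2 := by linarith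
          _ = ε := by ring
      exact Metric.mem_ball.mpr this
    calc q i ((Prod.snd ⁻¹' Metric.ball z (ε / 2)) \ {p : Z × Z | e ≤ edist p.1 p.2})
        ≤ q i (Prod.fst ⁻¹' Metric.ball z ε) := measure_mono hsub
      _ = μseq i (Metric.ball z ε) := by
          rw [← hfst i, Measure.map_apply measurable_fst measurableSet_ball]
  constructor
  · -- Part (a): narrow convergence
    -- limsup condition for closed sets
    have key : ∀ F : Set Z, IsClosed F → (atTop.limsup fun i => μseq i F) ≤ μ F := by
      intro F hF
      have main : ∀ δ : ℝ, 0 < δ →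
          (atTop.limsup fun i => μseq i F) ≤ μ (Metric.thickening δ F) := by
        intro δ hδ
        set e : ℝ≥0∞ := ENNReal.ofReal δ with he
        have he0 : e ≠ 0 := by simp [he, ENNReal.ofReal_eq_zero, not_le]; linarith
        have he' : e ≠ ∞ := ENNReal.ofReal_ne_top
        have step : ∀ i, μseq i F ≤
            μ (Metric.thickening δ F) + (∫⁻ p, edist p.1 p.2 ∂(q i)) / e := by
          intro i
          have hsub : (Prod.fst ⁻¹' F : Set (Z × Z)) ⊆
              (Prod.snd ⁻¹' Metric.thickening δ F) ∪ {p : Z × Z | e ≤ edist p.1 p.2} := by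
            rintro ⟨x, y⟩ hx
            by_cases hpe : e ≤ edist x y
            · exact Or.inr hpe
            · left
              push_neg at hpe
              have : EMetric.infEdist y F < e :=
                lt_of_le_of_lt (EMetric.infEdist_le_edist_of_mem (x := y) hx) ?_
              · exact Metric.mem_thickening_iff_infEdist_lt.mpr this
              · rwa [edist_comm] at hpe
          calc μseq i F = q i (Prod.fst ⁻¹' F) := by
                rw [← hfst i, Measure.map_apply measurable_fst hF.measurableSet]
            _ ≤ q i (Prod.snd ⁻¹' Metric.thickening δ F) + q i {p : Z × Z | e ≤ edist p.1 p.2} :=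
                (measure_mono hsub).trans (measure_union_le _ _)
            _ ≤ μ (Metric.thickening δ F) + (∫⁻ p, edist p.1 p.2 ∂(q i)) / e := by
                gcongr
                · rw [← hsnd i,
                    Measure.map_apply measurable_snd Metric.isOpen_thickening.measurableSet]
                · exact markov i e he0 he'
        have htend : Tendsto
            (fun i => μ (Metric.thickening δ F) + (∫⁻ p, edist p.1 p.2 ∂(q i)) / e) atTop
            (𝓝 (μ (Metric.thickening δ F))) := by
          have : Tendsto (fun i => (∫⁻ p, edist p.1 p.2 ∂(q i)) / e) atTop (𝓝 0) := by
            simpa [ENNReal.div_eq_inv_mul, mul_comm] using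
              (ENNReal.Tendsto.mul_const hconv
                (Or.inr (ENNReal.inv_ne_top.mpr he0)) : Tendsto
                (fun i => (∫⁻ p, edist p.1 p.2 ∂(q i)) * e⁻¹) atTop (𝓝 (0 * e⁻¹)))
          simpa using (tendsto_const_nhds.add this :
            Tendsto (fun i => μ (Metric.thickening δ F) + (∫⁻ p, edist p.1 p.2 ∂(q i)) / e)
              atTop (𝓝 (μ (Metric.thickening δ F) + 0)))
        calc (atTop.limsup fun i => μseq i F)
            ≤ atTop.limsup (fun i => μ (Metric.thickening δ F) +
                (∫⁻ p, edist p.1 p.2 ∂(q i)) / e) := limsup_le_limsup (.of_forall step)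
          _ = μ (Metric.thickening δ F) := htend.limsup_eq
      -- let the thickening radius tend to zero
      have hthick : Tendsto (fun r => μ (Metric.thickening r F)) (𝓝[>] 0) (𝓝 (μ F)) :=
        tendsto_measure_thickening_of_isClosed ⟨1, one_pos, measure_ne_top μ _⟩ hF
      exact ge_of_tendsto hthick (eventually_nhdsWithin_of_forall fun r hr => main r hr)
    have h_opens : ∀ G, IsOpen G → μ G ≤ atTop.liminf fun i => μseq i G :=
      limsup_measure_closed_le_iff_liminf_measure_open_ge.mp key
    intro f
    exact tendsto_integral_of_forall_integral_le_liminf_integral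
      (fun g hg =>
        integral_le_liminf_integral_of_forall_isOpen_measure_le_liminf_measure hg h_opens) f
  · -- Part (b): convergence of supports
    intro z hz
    set S : ℕ → Set Z := fun i => {x | ∀ r > (0 : ℝ), 0 < μseq i (Metric.ball x r)} with hS
    -- the complement of `S i` is `μseq i`-null
    have hSnull : ∀ i, μseq i (S i)ᶜ = 0 := by
      intro i
      refine measure_null_of_locally_null _ ?_
      intro x hx
      simp only [hS, Set.mem_compl_iff, Set.mem_setOf_eq, not_forall] at hx
      obtain ⟨r, hr, hr0⟩ := hx
      rw [not_lt, nonpos_iff_eq_zero] at hr0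
      exact ⟨Metric.ball x r, nhdsWithin_le_nhds (Metric.ball_mem_nhds x hr), hr0⟩
    have hSne : ∀ i, (S i).Nonempty := by
      intro i
      rw [Set.nonempty_iff_ne_empty]
      intro h
      have : μseq i (S i)ᶜ = 1 := by rw [h, Set.compl_empty, measure_univ]
      rw [hSnull i] at this
      exact one_ne_zero this.symm
    -- balls around z meet S i for small radii, eventually
    have hmeet : ∀ ε > (0 : ℝ), ∀ᶠ i in atTop, ∃ x ∈ S i, dist z x < ε := by
      intro ε hε
      filter_upwards [ball_pos z hz ε hε] with i hi
      have : (S i ∩ Metric.ball z ε).Nonempty := by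
        rw [Set.nonempty_iff_ne_empty]
        intro h
        have hsub : Metric.ball z ε ⊆ (S i)ᶜ := by
          intro x hx hxS
          exact Set.eq_empty_iff_forall_notMem.mp h x ⟨hxS, hx⟩
        have := (measure_mono hsub).trans (hSnull i).le
        simp only [nonpos_iff_eq_zero] at this
        exact absurd this hi.ne'
      obtain ⟨x, hxS, hxb⟩ := this
      exact ⟨x, hxS, by rw [dist_comm]; exact Metric.mem_ball.mp hxb⟩
    -- infDist z (S i) → 0
    have hinf : Tendsto (fun i => Metric.infDist z (S i)) atTop (𝓝 0) := by
      rw [Metric.tendsto_nhds]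
      intro ε hε
      filter_upwards [hmeet ε hε] with i hi
      obtain ⟨x, hxS, hxd⟩ := hi
      have h1 : Metric.infDist z (S i) ≤ dist z x := Metric.infDist_le_dist_of_mem hxS
      have h0 : 0 ≤ Metric.infDist z (S i) := Metric.infDist_nonneg
      rw [Real.dist_eq, abs_of_nonneg (by simpa using h0)]
      · calc Metric.infDist z (S i) - 0 = Metric.infDist z (S i) := by ring
          _ ≤ dist z x := h1
          _ < ε := hxd
    -- choose `zseq i` almost realizing the infimum
    have hex : ∀ i : ℕ, ∃ x, x ∈ S i ∧
        dist z x < Metric.infDist z (S i) + 1 / (i + 1) := by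
      intro i
      have hpos : (0 : ℝ) < 1 / (i + 1) := by positivity
      have : Metric.infDist z (S i) < Metric.infDist z (S i) + 1 / (i + 1) := by linarith
      obtain ⟨x, hxS, hxd⟩ := (Metric.infDist_lt_iff (hSne i)).mp this
      exact ⟨x, hxS, hxd⟩
    choose zseq hmem hdist using hex
    refine ⟨zseq, fun i => hmem i, ?_⟩
    rw [Metric.tendsto_nhds]
    intro ε hε
    have h1 : ∀ᶠ i in atTop, Metric.infDist z (S i) < ε / 2 := by
      have := Metric.tendsto_nhds.mp hinf (ε / 2) (by linarith)
      filter_upwards [this] with i hi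
      rw [Real.dist_eq, abs_of_nonneg (by simpa using Metric.infDist_nonneg)] at hi
      linarith [hi]
    have h2 : ∀ᶠ (i : ℕ) in atTop, (1 : ℝ) / (↑i + 1) < ε / 2 :=
      tendsto_one_div_add_atTop_nhds_zero_nat.eventually_lt_const
        (show (0 : ℝ) < ε / 2 by linarith)
    filter_upwards [h1, h2] with i hi1 hi2
    have := hdist i
    rw [dist_comm] at this
    calc dist (zseq i) z < Metric.infDist z (S i) + 1 / (i + 1) := this
      _ < ε / 2 + ε / 2 := by linarith
      _ = ε := by ring
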